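/- Consider the repeated get-close-to-the-target game with target k ∈ {1,…,n} and an arbitrary sequence of opponent actions b : ℕ → {1,…,n}. Define the bisection learner: it maintains an interval, initially {1,…,n}; in each round it plays the midpoint a_t = ⌊(lo_t + hi_t)/2⌋ of its current interval {lo_t,…,hi_t}; after each round it replaces its interval by the set of targets in the current interval consistent with the observed outcome (in particular, after losing to b_t ≤ a_t it keeps {lo_t,…,a_t−1}, after losing to b_t > a_t it keeps {a_t+1,…,hi_t}, and after a draw with b_t ≠ a_t it keeps the singleton {(a_t+b_t)/2}). Then the target k belongs to the learner's interval in every round, and the total number of rounds that player 1 loses (over the infinite play) is at most ⌈log₂ n⌉. -/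

import Mathlib

/-- Possible outcomes of a round of a zero-sum stage game. -/
inductive Outcome
  | P1Wins
  | P2Wins
  | Draw
deriving DecidableEq

/-- The outcome of a round of *get-close-to-the-target* with actions `a₁` (player 1),
`a₂` (player 2) and hidden target `k`: if `|aᵢ - k| < |a₋ᵢ - k|` then player `i` wins;
if `a₁ = a₂ = a ≠ k` then player 1 wins if `a < k` and player 2 wins if `a > k`;
otherwise the round is a draw. -/
def outcome (a₁ a₂ k : ℤ) : Outcome :=
  if |a₁ - k| < |a₂ - k| then .P1Wins
  else if |a₂ - k| < |a₁ - k| then .P2Wins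
  else if a₁ = a₂ ∧ a₁ ≠ k then (if a₁ < k then .P1Wins else .P2Wins)
  else .Draw

/-- If player 2 wins, the target is strictly on player 2's side of player 1's action. -/
lemma p2_bound (A B x : ℤ) (h : outcome A B x = .P2Wins) :
    (B ≤ A ∧ x < A) ∨ (A < B ∧ A < x) := by
  unfold outcome at h
  split_ifs at h with h1 h2 h3 h4 <;> try exact absurd h (by decide)
  · rcases abs_cases (B - x) with ⟨e1, e2⟩ | ⟨e1, e2⟩ <;>
      rcases abs_cases (A - x) with ⟨f1, f2⟩ | ⟨f1, f2⟩ <;> omega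
  · obtain ⟨e, hne⟩ := h3
    omega

/-- Consider the repeated get-close-to-the-target game with target `k ∈ {1,…,n}` and an
arbitrary sequence of opponent actions `b : ℕ → {1,…,n}`. The bisection learner maintains
an interval `{lo t,…,hi t}`, initially `{1,…,n}`; in round `t` it plays the midpoint
`a t = ⌊(lo t + hi t)/2⌋`; after the round, its new interval `{lo (t+1),…,hi (t+1)}` is
exactly the set of targets in the current interval consistent with the observed outcome.
Then the target `k` belongs to the learner's interval in every round, and the total
number of rounds that player 1 loses over the infinite play is at most
`⌈log₂ n⌉ = Nat.clog 2 n`. -/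
theorem stmt6 (n k : ℤ) (hn : 1 ≤ n) (hk : k ∈ Finset.Icc 1 n)
    (b : ℕ → ℤ) (hb : ∀ t, b t ∈ Finset.Icc 1 n)
    (lo hi a : ℕ → ℤ)
    (hlo0 : lo 0 = 1) (hhi0 : hi 0 = n)
    (ha : ∀ t, a t = (lo t + hi t) / 2)
    (hupd : ∀ t, ∀ k' : ℤ,
      (lo (t + 1) ≤ k' ∧ k' ≤ hi (t + 1)) ↔
        (lo t ≤ k' ∧ k' ≤ hi t ∧ outcome (a t) (b t) k' = outcome (a t) (b t) k)) :
    (∀ t, lo t ≤ k ∧ k ≤ hi t) ∧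
    {t : ℕ | outcome (a t) (b t) k = Outcome.P2Wins}.Finite ∧
    {t : ℕ | outcome (a t) (b t) k = Outcome.P2Wins}.ncard ≤ Nat.clog 2 n.toNat := by
  rw [Finset.mem_Icc] at hk
  -- the target is always in the interval
  have hmem : ∀ t, lo t ≤ k ∧ k ≤ hi t := by
    intro t
    induction t with
    | zero => exact ⟨by omega, by omega⟩
    | succ t ih => exact (hupd t k).mpr ⟨ih.1, ih.2, rfl⟩
  -- intervals are nested
  have hnest : ∀ t, lo t ≤ lo (t + 1) ∧ hi (t + 1) ≤ hi t := by
    intro t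
    have h1 := ((hupd t (lo (t + 1))).mp ⟨le_refl _, le_trans (hmem (t + 1)).1 (hmem (t + 1)).2⟩)
    have h2 := ((hupd t (hi (t + 1))).mp ⟨le_trans (hmem (t + 1)).1 (hmem (t + 1)).2, le_refl _⟩)
    exact ⟨h1.1, h2.2.1⟩
  -- after a loss the interval halves
  have hhalf : ∀ t, outcome (a t) (b t) k = Outcome.P2Wins →
      2 * (hi (t + 1) - lo (t + 1) + 1) ≤ hi t - lo t + 1 := by
    intro t ht
    have hk' := hmem (t + 1)
    have hLH : lo (t + 1) ≤ hi (t + 1) := le_trans hk'.1 hk'.2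
    have h1 := (hupd t (lo (t + 1))).mp ⟨le_refl _, hLH⟩
    have h2 := (hupd t (hi (t + 1))).mp ⟨hLH, le_refl _⟩
    have b1 := p2_bound _ _ _ (h1.2.2.trans ht)
    have b2 := p2_bound _ _ _ (h2.2.2.trans ht)
    have hA := ha t
    have hkm := hmem t
    omega
  set p : ℕ → Prop := fun t => outcome (a t) (b t) k = Outcome.P2Wins with hp
  have hdec : DecidablePred p := fun t => by unfold p; infer_instance
  -- main counting invariant
  have key : ∀ T, (2 : ℤ) ^ ((Finset.range T).filter p).card * (hi T - lo T + 1) ≤ n := by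
    intro T
    induction T with
    | zero => simp; omega
    | succ T ih =>
      have hst : hi (T + 1) - lo (T + 1) + 1 ≤ hi T - lo T + 1 := by
        have := hnest T; omega
      have hpos : (0 : ℤ) < hi (T + 1) - lo (T + 1) + 1 := by
        have := hmem (T + 1); omega
      have hpow : (0 : ℤ) ≤ 2 ^ ((Finset.range T).filter p).card := by positivity
      rw [Finset.range_add_one, Finset.filter_insert]
      by_cases hT : p T
      · rw [if_pos hT, Finset.card_insert_of_notMem (by simp)]
        have := hhalf T hT
        calc (2 : ℤ) ^ (((Finset.range T).filter p).card + 1) * (hi (T + 1) - lo (T + 1) + 1)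
            = 2 ^ ((Finset.range T).filter p).card * (2 * (hi (T + 1) - lo (T + 1) + 1)) := by
              ring
          _ ≤ 2 ^ ((Finset.range T).filter p).card * (hi T - lo T + 1) := by
              apply mul_le_mul_of_nonneg_left _ hpow; omega
          _ ≤ n := ih
      · rw [if_neg hT]
        calc (2 : ℤ) ^ ((Finset.range T).filter p).card * (hi (T + 1) - lo (T + 1) + 1)
            ≤ 2 ^ ((Finset.range T).filter p).card * (hi T - lo T + 1) :=
              mul_le_mul_of_nonneg_left hst hpow
          _ ≤ n := ih
  set c := Nat.clog 2 n.toNat with hc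
  -- any finite set of losing rounds has at most c elements
  have hcard : ∀ F : Finset ℕ, (∀ x ∈ F, p x) → F.card ≤ c := by
    intro F hF
    obtain ⟨T, hT⟩ := F.exists_nat_subset_range
    have hsub : F ⊆ (Finset.range T).filter p := by
      intro x hx
      exact Finset.mem_filter.mpr ⟨hT hx, hF x hx⟩
    have h1 : F.card ≤ ((Finset.range T).filter p).card := Finset.card_le_card hsub
    have h2 := key T
    have hpos : (1 : ℤ) ≤ hi T - lo T + 1 := by have := hmem T; omega
    have h3 : (2 : ℤ) ^ ((Finset.range T).filter p).card ≤ n := by nlinarith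
    have h4 : (2 : ℕ) ^ ((Finset.range T).filter p).card ≤ n.toNat := by
      have : ((2 ^ ((Finset.range T).filter p).card : ℕ) : ℤ) ≤ ((n.toNat : ℕ) : ℤ) := by
        push_cast
        omega
      exact_mod_cast this
    have h5 : ((Finset.range T).filter p).card ≤ Nat.log 2 n.toNat :=
      (Nat.le_log_iff_pow_le (by norm_num) (by omega)).mpr h4
    exact le_trans h1 (le_trans h5 (Nat.log_le_clog 2 n.toNat))
  have hS : {t : ℕ | outcome (a t) (b t) k = Outcome.P2Wins} = {t : ℕ | p t} := rfl
  have hfin : {t : ℕ | p t}.Finite := by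
    by_contra hinf
    have hinf' : Set.Infinite {t : ℕ | p t} := hinf
    obtain ⟨t, hts, htf, htc⟩ := hinf'.exists_subset_ncard_eq (c + 1)
    have : htf.toFinset.card ≤ c := by
      apply hcard
      intro x hx
      exact hts (htf.mem_toFinset.mp hx)
    rw [Set.ncard_eq_toFinset_card t htf] at htc
    omega
  refine ⟨hmem, by rw [hS]; exact hfin, ?_⟩
  rw [hS, Set.ncard_eq_toFinset_card _ hfin]
  apply hcard
  intro x hx
  exact hfin.mem_toFinset.mp hx
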